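/- Let ℓ,m,n ∈ ℕ with N := ℓ+m+n ≥ 1, let (𝛂,𝛃,𝛄) ∈ ℂ^N × ℂ^N × ℂ^{N(N−1)/2}, and let F : ℝ^N → ℂ be Borel measurable. Suppose ∏_{j=1}^N |x_j|^{Re α_j}|1−x_j|^{Re β_j} · ∏_{1≤j<k≤N}|x_k−x_j|^{2 Re γ_{j,k}} · |F(x)| is Lebesgue integrable on □_{ℓ,m,n}. Let 𝔖_{ℓ,m,n} denote the group of permutations σ of {1,…,N} preserving each of the blocks {1,…,ℓ}, {ℓ+1,…,ℓ+m}, {ℓ+m+1,…,N}, and set Θ(σ) := 2π Σ_{1≤j<k≤N, σ(j)>σ(k)} γ_{j,k}. Then ∫_{□_{ℓ,m,n}} Ψ_{𝛂,𝛃,𝛄}(x)·F(x) dx = Σ_{σ ∈ 𝔖_{ℓ,m,n}} e^{iΘ(σ^{−1})} ∫_{△_{ℓ,m,n}} [ ∏_{j=1}^N |x_j|^{α_{σ(j)}}|1−x_j|^{β_{σ(j)}} · ∏_{1≤j<k≤N}(x_k−x_j)^{2γ_{σ(j),σ(k)}} ] · F(x_{σ^{−1}(1)},…,x_{σ^{−1}(N)})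 dx, all integrals being absolutely convergent. -/

import Mathlib

open MeasureTheory
open scoped BigOperators

attribute [local instance] Classical.propDecidable

noncomputable def absPow (t : ℝ) (c : ℂ) : ℂ :=
  if t = 0 then 0 else Complex.exp (c * Real.log t)

noncomputable def absPowR (t : ℝ) (c : ℝ) : ℝ :=
  if t = 0 then 0 else Real.exp (c * Real.log t)

noncomputable def iPow (w : ℝ) (c : ℂ) : ℂ :=
  if 0 < w then absPow w c
  else if w < 0 then Complex.exp ((Real.pi : ℂ) * Complex.I * c) * absPow w c
  else 0

/-- The box `□_{ℓ,m,n} = (−∞,0]^ℓ × [0,1]^m × [1,∞)^n`. -/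
def boxLMN (ℓ m n : ℕ) : Set (Fin (ℓ + m + n) → ℝ) :=
  {x | ∀ i : Fin (ℓ + m + n),
    ((i : ℕ) < ℓ → x i ≤ 0) ∧
    (ℓ ≤ (i : ℕ) ∧ (i : ℕ) < ℓ + m → 0 ≤ x i ∧ x i ≤ 1) ∧
    (ℓ + m ≤ (i : ℕ) → 1 ≤ x i)}

/-- The simplex `△_{ℓ,m,n} = {x ∈ □_{ℓ,m,n} : x₁ ≤ ⋯ ≤ x_N}`. -/
def simplexLMN (ℓ m n : ℕ) : Set (Fin (ℓ + m + n) → ℝ) :=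
  boxLMN ℓ m n ∩ {x | ∀ i j : Fin (ℓ + m + n), i ≤ j → x i ≤ x j}

/-- The block (0, 1, or 2) of an index. -/
def blockIdx (ℓ m : ℕ) {N : ℕ} (i : Fin N) : ℕ :=
  if (i : ℕ) < ℓ then 0 else if (i : ℕ) < ℓ + m then 1 else 2

/-- The `(ℓ,m,n)`-DF integrand `Ψ_{α,β,γ}`. -/
noncomputable def dfIntG (N : ℕ) (α β : Fin N → ℂ) (γ : Fin N → Fin N → ℂ)
    (x : Fin N → ℝ) : ℂ :=
  (∏ j, absPow (x j) (α j) * absPow (1 - x j) (β j)) *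
    ∏ j, ∏ k, if j < k then iPow (x k - x j) (2 * γ j k) else 1

/-- The real majorant. -/
noncomputable def dfMajG (N : ℕ) (α β : Fin N → ℂ) (γ : Fin N → Fin N → ℂ)
    (x : Fin N → ℝ) : ℝ :=
  (∏ j, absPowR (x j) (α j).re * absPowR (1 - x j) (β j).re) *
    ∏ j, ∏ k, if j < k then absPowR (x k - x j) (2 * (γ j k).re) else 1

/-- `Θ(σ) = 2π Σ_{j<k, σ(j)>σ(k)} γ_{j,k}`. -/
noncomputable def Theta (N : ℕ) (γ : Fin N → Fin N → ℂ)
    (σ : Equiv.Perm (Fin N)) : ℂ :=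
  2 * (Real.pi : ℂ) * ∑ j : Fin N, ∑ k : Fin N,
    if j < k ∧ σ k < σ j then γ j k else 0

theorem Equiv.Perm.apply_inv_self {α : Type*} (f : Equiv.Perm α) (x : α) : f (f⁻¹ x) = x :=
  f.apply_symm_apply x

theorem Equiv.Perm.inv_apply_self {α : Type*} (f : Equiv.Perm α) (x : α) : f⁻¹ (f x) = x :=
  f.symm_apply_apply x

lemma absPow_neg (t : ℝ) (c : ℂ) : absPow (-t) c = absPow t c := by
  unfold absPow
  rcases eq_or_ne t 0 with h | h
  · simp [h]
  · rw [if_neg (neg_ne_zero.mpr h), if_neg h, Real.log_neg_eq_log]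

lemma absPowR_nonneg (t : ℝ) (c : ℝ) : 0 ≤ absPowR t c := by
  unfold absPowR; split_ifs
  · exact le_refl 0
  · exact (Real.exp_pos _).le

lemma abs_absPow (t : ℝ) (c : ℂ) : ‖absPow t c‖ = absPowR t c.re := by
  unfold absPow absPowR
  split_ifs with h
  · simp
  · rw [Complex.norm_exp]
    congr 1
    simp [Complex.mul_re]

lemma abs_iPow_le (w : ℝ) (c : ℂ) :
    ‖iPow w c‖ ≤ max 1 (Real.exp (-(Real.pi * c.im))) * absPowR w c.re := by
  unfold iPow
  split_ifs with h1 h2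
  · calc ‖absPow w c‖ = 1 * absPowR w c.re := by rw [abs_absPow, one_mul]
      _ ≤ _ := by
        apply mul_le_mul_of_nonneg_right (le_max_left _ _) (absPowR_nonneg _ _)
  · rw [norm_mul, abs_absPow, Complex.norm_exp]
    apply mul_le_mul_of_nonneg_right _ (absPowR_nonneg _ _)
    apply le_trans _ (le_max_right _ _)
    apply le_of_eq; congr 1
    simp [Complex.mul_re, Complex.mul_im]
  · simp only [norm_zero]
    have := absPowR_nonneg w c.re
    positivity

lemma measurable_absPow (c : ℂ) : Measurable fun t => absPow t c := by
  unfold absPow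
  apply Measurable.ite (measurableSet_eq) measurable_const
  exact Complex.measurable_exp.comp
    (measurable_const.mul (Complex.measurable_ofReal.comp Real.measurable_log))

lemma measurable_iPow (c : ℂ) : Measurable fun w => iPow w c := by
  unfold iPow
  apply Measurable.ite
  · exact measurableSet_lt measurable_const measurable_id
  · exact measurable_absPow c
  apply Measurable.ite
  · exact measurableSet_lt measurable_id measurable_const
  · exact measurable_const.mul (measurable_absPow c)
  · exact measurable_const

lemma measurable_dfIntG (N : ℕ) (α β : Fin N → ℂ) (γ : Fin N → Fin N → ℂ) :
    Measurable (dfIntG N α β γ) := by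
  unfold dfIntG
  apply Measurable.mul
  · apply Finset.measurable_prod
    intro j _
    exact ((measurable_absPow (α j)).comp (measurable_pi_apply j)).mul
      ((measurable_absPow (β j)).comp (measurable_const.sub (measurable_pi_apply j)))
  · apply Finset.measurable_prod
    intro j _
    apply Finset.measurable_prod
    intro k _
    by_cases h : j < k
    · simp only [if_pos h]
      exact (measurable_iPow (2 * γ j k)).comp
        ((measurable_pi_apply k).sub (measurable_pi_apply j))
    · simp only [if_neg h]; exact measurable_const

lemma dfMajG_nonneg (N : ℕ) (α β : Fin N → ℂ) (γ : Fin N → Fin N → ℂ) (x : Fin N → ℝ) :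
    0 ≤ dfMajG N α β γ x := by
  unfold dfMajG
  apply mul_nonneg
  · exact Finset.prod_nonneg fun j _ =>
      mul_nonneg (absPowR_nonneg _ _) (absPowR_nonneg _ _)
  · apply Finset.prod_nonneg
    intro j _
    apply Finset.prod_nonneg
    intro k _
    split_ifs
    · exact absPowR_nonneg _ _
    · exact zero_le_one

lemma abs_dfIntG_le (N : ℕ) (α β : Fin N → ℂ) (γ : Fin N → Fin N → ℂ) (x : Fin N → ℝ) :
    ‖dfIntG N α β γ x‖ ≤
      (∏ j : Fin N, ∏ k : Fin N, max 1 (Real.exp (-(Real.pi * (2 * γ j k).im)))) *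
        dfMajG N α β γ x := by
  unfold dfIntG dfMajG
  rw [norm_mul]
  have h1 : ‖∏ j, absPow (x j) (α j) * absPow (1 - x j) (β j)‖
      = ∏ j, absPowR (x j) (α j).re * absPowR (1 - x j) (β j).re := by
    rw [norm_prod]
    exact Finset.prod_congr rfl fun j _ => by rw [norm_mul, abs_absPow, abs_absPow]
  rw [h1]
  rw [show (∏ j : Fin N, ∏ k : Fin N, max 1 (Real.exp (-(Real.pi * (2 * γ j k).im)))) *
      ((∏ j, absPowR (x j) (α j).re * absPowR (1 - x j) (β j).re) *
       ∏ j, ∏ k, if j < k then absPowR (x k - x j) (2 * (γ j k).re) else 1)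
    = (∏ j, absPowR (x j) (α j).re * absPowR (1 - x j) (β j).re) *
      ((∏ j : Fin N, ∏ k : Fin N, max 1 (Real.exp (-(Real.pi * (2 * γ j k).im)))) *
       ∏ j, ∏ k, if j < k then absPowR (x k - x j) (2 * (γ j k).re) else 1) from by ring]
  have hPnn : (0:ℝ) ≤ ∏ j, absPowR (x j) (α j).re * absPowR (1 - x j) (β j).re :=
    Finset.prod_nonneg fun j _ => mul_nonneg (absPowR_nonneg _ _) (absPowR_nonneg _ _)
  have hmain : ‖∏ j, ∏ k, if j < k then iPow (x k - x j) (2 * γ j k) else 1‖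
      ≤ (∏ j : Fin N, ∏ k : Fin N, max 1 (Real.exp (-(Real.pi * (2 * γ j k).im)))) *
       ∏ j, ∏ k, if j < k then absPowR (x k - x j) (2 * (γ j k).re) else 1 := by
    rw [norm_prod, ← Finset.prod_mul_distrib]
    apply Finset.prod_le_prod
    · intro j _; exact norm_nonneg _
    intro j _
    rw [norm_prod, ← Finset.prod_mul_distrib]
    apply Finset.prod_le_prod
    · intro k _; exact norm_nonneg _
    intro k _
    by_cases h : j < k
    · simp only [if_pos h]
      calc ‖iPow (x k - x j) (2 * γ j k)‖
          ≤ max 1 (Real.exp (-(Real.pi * (2 * γ j k).im))) * absPowR (x k - x j) (2 * γ j k).re :=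
            abs_iPow_le _ _
        _ = max 1 (Real.exp (-(Real.pi * (2 * γ j k).im))) * absPowR (x k - x j) (2 * (γ j k).re) := by
            congr 1
            simp [Complex.mul_re]
    · simp only [if_neg h, norm_one, mul_one]
      exact le_max_left _ _
  exact mul_le_mul_of_nonneg_left hmain hPnn

lemma volume_hyperplane {N : ℕ} {i j : Fin N} (h : i ≠ j) :
    volume {x : Fin N → ℝ | x i = x j} = 0 := by
  have heq : {x : Fin N → ℝ | x i = x j}
      = (LinearMap.ker ((LinearMap.proj i : (Fin N → ℝ) →ₗ[ℝ] ℝ) - LinearMap.proj j) : Set _) := by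
    ext x
    simp only [Set.mem_setOf_eq, SetLike.mem_coe, LinearMap.mem_ker, LinearMap.sub_apply,
      LinearMap.proj_apply, sub_eq_zero]
  rw [heq]
  apply Measure.addHaar_submodule
  intro htop
  have h1 : (Pi.single i 1 : Fin N → ℝ) ∈
      LinearMap.ker ((LinearMap.proj i : (Fin N → ℝ) →ₗ[ℝ] ℝ) - LinearMap.proj j) := by
    rw [htop]; trivial
  simp only [LinearMap.mem_ker, LinearMap.sub_apply, LinearMap.proj_apply] at h1
  rw [Pi.single_eq_same, Pi.single_eq_of_ne (Ne.symm h)] at h1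
  norm_num at h1

lemma volume_noninj {N : ℕ} :
    volume {x : Fin N → ℝ | ¬ Function.Injective x} = 0 := by
  refine measure_mono_null ?_
    (measure_iUnion_null (s := fun i : Fin N => ⋃ (j : Fin N), ⋃ (_ : i ≠ j), {x | x i = x j})
      fun i => measure_iUnion_null fun j => measure_iUnion_null fun h => volume_hyperplane h)
  intro x hx
  simp only [Set.mem_setOf_eq, Function.Injective, not_forall] at hx
  obtain ⟨i, j, hij, hne⟩ := hx
  exact Set.mem_iUnion.mpr ⟨i, Set.mem_iUnion.mpr ⟨j, Set.mem_iUnion.mpr ⟨hne, hij⟩⟩⟩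

lemma blockIdx_lt_iff {ℓ m N : ℕ} {i j : Fin N} (h : blockIdx ℓ m i = blockIdx ℓ m j) :
    ((i : ℕ) < ℓ ↔ (j : ℕ) < ℓ) ∧ ((i : ℕ) < ℓ + m ↔ (j : ℕ) < ℓ + m) := by
  unfold blockIdx at h
  split_ifs at h <;> omega

lemma blockIdx_monotone {ℓ m N : ℕ} : Monotone (fun i : Fin N => blockIdx ℓ m i) := by
  intro i j hij
  have : (i : ℕ) ≤ (j : ℕ) := hij
  simp only [blockIdx]
  split_ifs <;> omega

lemma measurableSet_imp {N : ℕ} (p : Prop) (S : Set (Fin N → ℝ)) (hS : MeasurableSet S) :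
    MeasurableSet {x | p → x ∈ S} := by
  by_cases hp : p
  · simp only [hp, true_implies]; exact hS
  · simp only [hp, false_implies]; exact MeasurableSet.univ

lemma measurableSet_boxLMN (ℓ m n : ℕ) : MeasurableSet (boxLMN ℓ m n) := by
  have heq : boxLMN ℓ m n = ⋂ i : Fin (ℓ + m + n),
      ({x : Fin (ℓ + m + n) → ℝ | (i : ℕ) < ℓ → x ∈ {x | x i ≤ 0}} ∩
        ({x | ℓ ≤ (i : ℕ) ∧ (i : ℕ) < ℓ + m → x ∈ {x | 0 ≤ x i} ∩ {x | x i ≤ 1}} ∩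
          {x | ℓ + m ≤ (i : ℕ) → x ∈ {x | 1 ≤ x i}})) := by
    ext x
    simp only [boxLMN, Set.mem_setOf_eq, Set.mem_iInter, Set.mem_inter_iff]
  rw [heq]
  refine MeasurableSet.iInter fun i => ?_
  refine (measurableSet_imp _ _ ?_).inter ((measurableSet_imp _ _ ?_).inter
    (measurableSet_imp _ _ ?_))
  · exact measurableSet_le (measurable_pi_apply i) measurable_const
  · exact (measurableSet_le measurable_const (measurable_pi_apply i)).inter
      (measurableSet_le (measurable_pi_apply i) measurable_const)
  · exact measurableSet_le measurable_const (measurable_pi_apply i)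

lemma measurableSet_strictMono {N : ℕ} : MeasurableSet {x : Fin N → ℝ | StrictMono x} := by
  have heq : {x : Fin N → ℝ | StrictMono x} =
      ⋂ i : Fin N, ⋂ j : Fin N, {x | i < j → x ∈ {x : Fin N → ℝ | x i < x j}} := by
    ext x
    simp only [Set.mem_setOf_eq, Set.mem_iInter]
    constructor
    · intro h i j hij; exact h hij
    · intro h i j hij; exact h i j hij
  rw [heq]
  exact MeasurableSet.iInter fun i => MeasurableSet.iInter fun j =>
    measurableSet_imp _ _ (measurableSet_lt (measurable_pi_apply i) (measurable_pi_apply j))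

lemma block_inv {ℓ m N : ℕ} {σ : Equiv.Perm (Fin N)}
    (hσ : ∀ i, blockIdx ℓ m i = blockIdx ℓ m (σ i)) :
    ∀ i, blockIdx ℓ m i = blockIdx ℓ m (σ⁻¹ i) := by
  intro i
  have h := hσ (σ⁻¹ i)
  rw [Equiv.Perm.apply_inv_self] at h
  exact h.symm

lemma box_perm {ℓ m n : ℕ} {σ : Equiv.Perm (Fin (ℓ + m + n))}
    (hσ : ∀ i, blockIdx ℓ m i = blockIdx ℓ m (σ i)) {x : Fin (ℓ + m + n) → ℝ}
    (hx : x ∈ boxLMN ℓ m n) : (fun i => x (σ i)) ∈ boxLMN ℓ m n := by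
  intro i
  obtain ⟨h1, h2⟩ := blockIdx_lt_iff (hσ i)
  have H := hx (σ i)
  exact ⟨fun h => H.1 (h1.mp h), fun h => H.2.1 (by omega), fun h => H.2.2 (by omega)⟩

lemma box_perm_iff {ℓ m n : ℕ} {σ : Equiv.Perm (Fin (ℓ + m + n))}
    (hσ : ∀ i, blockIdx ℓ m i = blockIdx ℓ m (σ i)) {x : Fin (ℓ + m + n) → ℝ} :
    (fun i => x (σ i)) ∈ boxLMN ℓ m n ↔ x ∈ boxLMN ℓ m n := by
  constructor
  · intro h
    have h2 := box_perm (block_inv hσ) h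
    have : (fun i => (fun j => x (σ j)) (σ⁻¹ i)) = x := by
      funext i; simp
    rwa [this] at h2
  · exact box_perm hσ

lemma exists_sort_block {ℓ m n : ℕ} {x : Fin (ℓ + m + n) → ℝ} (hx : x ∈ boxLMN ℓ m n)
    (hinj : Function.Injective x) :
    ∃ σ : Equiv.Perm (Fin (ℓ + m + n)), (∀ i, blockIdx ℓ m i = blockIdx ℓ m (σ i)) ∧
      StrictMono (fun i => x (σ i)) := by
  set σ := Tuple.sort x with hσdef
  have hmono : Monotone (x ∘ σ) := Tuple.monotone_sort x
  have hsm : StrictMono (x ∘ σ) := hmono.strictMono_of_injective (hinj.comp σ.injective)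
  refine ⟨σ, ?_, hsm⟩
  have key : ∀ a b : Fin (ℓ + m + n), blockIdx ℓ m a < blockIdx ℓ m b → x a ≠ x b →
      x a < x b := by
    intro a b hab hne
    have Ha := hx a
    have Hb := hx b
    simp only [blockIdx] at hab
    split_ifs at hab
    all_goals
      first
      | exact absurd hab (by omega)
      | exact lt_of_le_of_ne (le_trans (Ha.1 (by omega)) (Hb.2.1 (by omega)).1) hne
      | exact lt_of_lt_of_le (lt_of_le_of_lt (Ha.1 (by omega)) one_pos) (Hb.2.2 (by omega))
      | exact lt_of_le_of_ne (le_trans (Ha.2.1 (by omega)).2 (Hb.2.2 (by omega))) hne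
  have hg : Monotone ((fun i => blockIdx ℓ m i) ∘ σ) := by
    intro p q hpq
    by_contra hlt
    push_neg at hlt
    have hneq : σ q ≠ σ p := by
      intro h
      have : q = p := σ.injective h
      subst this
      exact lt_irrefl _ hlt
    have hne : x (σ q) ≠ x (σ p) := fun h => hneq (hinj h)
    have hlt2 : x (σ q) < x (σ p) := key _ _ hlt hne
    exact absurd (hmono hpq) (not_le.mpr hlt2)
  have huniq := Tuple.unique_monotone (f := fun i => blockIdx ℓ m i) (σ := σ)
    (τ := Equiv.refl _) hg (by simpa using blockIdx_monotone (ℓ := ℓ) (m := m))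
  intro i
  have := congrFun huniq i
  simp only [Function.comp_apply, Equiv.refl_apply] at this
  exact this.symm

lemma strictMono_perm_unique {N : ℕ} {x : Fin N → ℝ} {σ τ : Equiv.Perm (Fin N)}
    (hσ : StrictMono (fun i => x (σ i))) (hτ : StrictMono (fun i => x (τ i))) : σ = τ := by
  have hinj : Function.Injective x := by
    intro a b hab
    have h2 : x (σ (σ⁻¹ a)) = x (σ (σ⁻¹ b)) := by
      simpa [Equiv.Perm.apply_inv_self] using hab
    have := hσ.injective h2
    exact (Equiv.injective σ⁻¹).eq_iff.mp this
  have heq : x ∘ σ = x ∘ τ :=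
    Tuple.unique_monotone (f := x) hσ.monotone hτ.monotone
  exact Equiv.ext fun i => hinj (congrFun heq i)

lemma prod_pairs {M : Type*} [CommMonoid M] {N : ℕ} (h : Fin N → Fin N → M) :
    (∏ j, ∏ k, if j < k then h j k else 1) =
      ∏ p ∈ (Finset.univ ×ˢ Finset.univ).filter (fun p : Fin N × Fin N => p.1 < p.2),
        h p.1 p.2 := by
  rw [Finset.prod_filter,
    Finset.prod_product' (f := fun j k : Fin N => if j < k then h j k else 1)]

noncomputable def pairMap {N : ℕ} (σ : Equiv.Perm (Fin N)) (p : Fin N × Fin N) :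
    Fin N × Fin N :=
  if σ p.1 < σ p.2 then (σ p.1, σ p.2) else (σ p.2, σ p.1)

lemma pairMap_lt {N : ℕ} (σ : Equiv.Perm (Fin N)) {p : Fin N × Fin N} (hp : p.1 < p.2) :
    (pairMap σ p).1 < (pairMap σ p).2 := by
  unfold pairMap
  split_ifs with h
  · exact h
  · exact lt_of_le_of_ne (not_lt.mp h)
      (fun heq => hp.ne' (σ.injective heq))

lemma pairMap_pairMap {N : ℕ} (σ : Equiv.Perm (Fin N)) {p : Fin N × Fin N} (hp : p.1 < p.2) :
    pairMap σ (pairMap σ⁻¹ p) = p := by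
  unfold pairMap
  by_cases h : σ⁻¹ p.1 < σ⁻¹ p.2
  · rw [if_pos h]
    simp only [Equiv.Perm.apply_inv_self]
    rw [if_pos hp]
  · rw [if_neg h]
    simp only [Equiv.Perm.apply_inv_self]
    rw [if_neg (not_lt.mpr hp.le)]

lemma phase_prod {N : ℕ} (γ : Fin N → Fin N → ℂ) (σ : Equiv.Perm (Fin N)) :
    (∏ p ∈ (Finset.univ ×ˢ Finset.univ).filter (fun p : Fin N × Fin N => p.1 < p.2),
      if σ p.2 < σ p.1 then Complex.exp ((Real.pi : ℂ) * Complex.I * (2 * γ p.1 p.2)) else 1)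
      = Complex.exp (Complex.I * Theta N γ σ) := by
  have hfac : ∀ p ∈ (Finset.univ ×ˢ Finset.univ).filter
      (fun p : Fin N × Fin N => p.1 < p.2),
      (if σ p.2 < σ p.1 then Complex.exp ((Real.pi : ℂ) * Complex.I * (2 * γ p.1 p.2)) else 1)
        = Complex.exp (if σ p.2 < σ p.1 then (Real.pi : ℂ) * Complex.I * (2 * γ p.1 p.2) else 0) := by
    intro p _
    split_ifs
    · rfl
    · rw [Complex.exp_zero]
  rw [Finset.prod_congr rfl hfac, ← Complex.exp_sum]
  congr 1
  rw [Finset.sum_filter,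
    Finset.sum_product' (f := fun j k : Fin N =>
      if j < k then (if σ k < σ j then (Real.pi : ℂ) * Complex.I * (2 * γ j k) else 0) else 0)]
  unfold Theta
  rw [Finset.mul_sum, Finset.mul_sum]
  apply Finset.sum_congr rfl
  intro j _
  rw [Finset.mul_sum, Finset.mul_sum]
  apply Finset.sum_congr rfl
  intro k _
  rw [mul_ite, mul_ite, mul_zero, mul_zero]
  by_cases h1 : j < k
  · by_cases h2 : σ k < σ j
    · rw [if_pos h1, if_pos h2, if_pos (⟨h1, h2⟩ : j < k ∧ σ k < σ j)]
      ring
    · rw [if_pos h1, if_neg h2, if_neg (fun hc : j < k ∧ σ k < σ j => h2 hc.2)]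
  · rw [if_neg h1, if_neg (fun hc : j < k ∧ σ k < σ j => h1 hc.1)]

lemma dfIntG_perm {N : ℕ} (α β : Fin N → ℂ) (γ : Fin N → Fin N → ℂ)
    (hγsym : ∀ j k, γ j k = γ k j) (σ : Equiv.Perm (Fin N)) {y : Fin N → ℝ}
    (hy : StrictMono y) :
    dfIntG N α β γ (fun i => y (σ⁻¹ i)) =
      Complex.exp (Complex.I * Theta N γ σ⁻¹) *
        ((∏ j, absPow (y j) (α (σ j)) * absPow (1 - y j) (β (σ j))) *
          ∏ j, ∏ k, if j < k then absPow (y k - y j) (2 * γ (σ j) (σ k)) else 1) := by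
  simp only [dfIntG]
  have hA : (∏ j, absPow (y (σ⁻¹ j)) (α j) * absPow (1 - y (σ⁻¹ j)) (β j))
      = ∏ j, absPow (y j) (α (σ j)) * absPow (1 - y j) (β (σ j)) := by
    rw [← Equiv.prod_comp σ
      (fun j => absPow (y (σ⁻¹ j)) (α j) * absPow (1 - y (σ⁻¹ j)) (β j))]
    apply Finset.prod_congr rfl
    intro j _
    simp
  have hB : (∏ j, ∏ k, if j < k then iPow (y (σ⁻¹ k) - y (σ⁻¹ j)) (2 * γ j k) else 1)
      = Complex.exp (Complex.I * Theta N γ σ⁻¹) *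
        ∏ j, ∏ k, if j < k then absPow (y k - y j) (2 * γ (σ j) (σ k)) else 1 := by
    rw [prod_pairs, prod_pairs]
    have hsplit : ∀ p ∈ (Finset.univ ×ˢ Finset.univ).filter
        (fun p : Fin N × Fin N => p.1 < p.2),
        iPow (y (σ⁻¹ p.2) - y (σ⁻¹ p.1)) (2 * γ p.1 p.2)
          = (if σ⁻¹ p.2 < σ⁻¹ p.1 then
              Complex.exp ((Real.pi : ℂ) * Complex.I * (2 * γ p.1 p.2)) else 1)
            * absPow (y (σ⁻¹ p.2) - y (σ⁻¹ p.1)) (2 * γ p.1 p.2) := by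
      intro p hp
      have hp12 : p.1 < p.2 := (Finset.mem_filter.mp hp).2
      have hne : σ⁻¹ p.1 ≠ σ⁻¹ p.2 := fun h => hp12.ne (Equiv.injective _ h)
      rcases lt_or_gt_of_ne hne with h | h
      · have hpos : 0 < y (σ⁻¹ p.2) - y (σ⁻¹ p.1) := sub_pos.mpr (hy h)
        rw [if_neg (not_lt.mpr (le_of_lt h)), one_mul]
        unfold iPow
        rw [if_pos hpos]
      · have hneg : y (σ⁻¹ p.2) - y (σ⁻¹ p.1) < 0 := sub_neg.mpr (hy h)
        rw [if_pos h]
        unfold iPow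
        rw [if_neg (not_lt.mpr hneg.le), if_pos hneg]
    rw [Finset.prod_congr rfl hsplit, Finset.prod_mul_distrib]
    congr 1
    · exact phase_prod γ σ⁻¹
    · refine Finset.prod_nbij' (pairMap σ⁻¹) (pairMap σ) ?_ ?_ ?_ ?_ ?_
      · intro p hp
        simp only [Finset.mem_filter, Finset.mem_product, Finset.mem_univ, true_and] at hp ⊢
        exact pairMap_lt σ⁻¹ hp
      · intro p hp
        simp only [Finset.mem_filter, Finset.mem_product, Finset.mem_univ, true_and] at hp ⊢
        exact pairMap_lt σ hp
      · intro p hp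
        simp only [Finset.mem_filter, Finset.mem_product, Finset.mem_univ, true_and] at hp
        exact pairMap_pairMap σ hp
      · intro p hp
        simp only [Finset.mem_filter, Finset.mem_product, Finset.mem_univ, true_and] at hp
        have := pairMap_pairMap σ⁻¹ (p := p) hp
        rw [inv_inv] at this
        exact this
      · intro p hp
        simp only [Finset.mem_filter, Finset.mem_product, Finset.mem_univ, true_and] at hp
        unfold pairMap
        by_cases h : σ⁻¹ p.1 < σ⁻¹ p.2
        · rw [if_pos h]
          simp only [Equiv.Perm.apply_inv_self]
        · rw [if_neg h]
          simp only [Equiv.Perm.apply_inv_self]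
          rw [show y (σ⁻¹ p.1) - y (σ⁻¹ p.2) = -(y (σ⁻¹ p.2) - y (σ⁻¹ p.1)) by ring,
            absPow_neg, hγsym p.2 p.1]
  rw [hA, hB]
  ring

theorem stmt10 (ℓ m n : ℕ) (hN : 1 ≤ ℓ + m + n)
    (α β : Fin (ℓ + m + n) → ℂ) (γ : Fin (ℓ + m + n) → Fin (ℓ + m + n) → ℂ)
    (hγsym : ∀ j k, γ j k = γ k j)
    (F : (Fin (ℓ + m + n) → ℝ) → ℂ) (hFmeas : Measurable F)
    (hint : IntegrableOn
      (fun x => dfMajG (ℓ + m + n) α β γ x * ‖F x‖)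
      (boxLMN ℓ m n) volume) :
    (∫ x in boxLMN ℓ m n, dfIntG (ℓ + m + n) α β γ x * F x)
      = ∑ σ ∈ Finset.univ.filter
            (fun σ : Equiv.Perm (Fin (ℓ + m + n)) =>
              ∀ i, blockIdx ℓ m i = blockIdx ℓ m (σ i)),
          Complex.exp (Complex.I * Theta (ℓ + m + n) γ σ⁻¹) *
          ∫ x in simplexLMN ℓ m n,
            ((∏ j, absPow (x j) (α (σ j)) * absPow (1 - x j) (β (σ j))) *
              ∏ j, ∏ k, if j < k then absPow (x k - x j) (2 * γ (σ j) (σ k)) else 1) *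
            F (fun i => x (σ⁻¹ i)) := by
  set C : ℝ := ∏ j : Fin (ℓ + m + n), ∏ k : Fin (ℓ + m + n),
      max 1 (Real.exp (-(Real.pi * (2 * γ j k).im))) with hC
  have hfm : Measurable (fun x => dfIntG (ℓ + m + n) α β γ x * F x) :=
    (measurable_dfIntG _ α β γ).mul hFmeas
  have hfint : IntegrableOn (fun x => dfIntG (ℓ + m + n) α β γ x * F x)
      (boxLMN ℓ m n) volume := by
    refine Integrable.mono (hint.const_mul C) hfm.aestronglyMeasurable.restrict ?_
    filter_upwards with x
    have h1 : ‖dfIntG (ℓ + m + n) α β γ x * F x‖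
        = ‖dfIntG (ℓ + m + n) α β γ x‖ * ‖F x‖ := by
      rw [norm_mul]
    rw [h1, Real.norm_eq_abs]
    calc ‖dfIntG (ℓ + m + n) α β γ x‖ * ‖F x‖
        ≤ (C * dfMajG (ℓ + m + n) α β γ x) * ‖F x‖ :=
          mul_le_mul_of_nonneg_right (abs_dfIntG_le _ α β γ x) (norm_nonneg _)
      _ = C * (dfMajG (ℓ + m + n) α β γ x * ‖F x‖) := by ring
      _ ≤ |C * (dfMajG (ℓ + m + n) α β γ x * ‖F x‖)| := le_abs_self _
  set Δ : Set (Fin (ℓ + m + n) → ℝ) := boxLMN ℓ m n ∩ {y | StrictMono y} with hΔ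
  have hΔmeas : MeasurableSet Δ :=
    (measurableSet_boxLMN ℓ m n).inter measurableSet_strictMono
  set E : Equiv.Perm (Fin (ℓ + m + n)) → Set (Fin (ℓ + m + n) → ℝ) :=
    fun σ => (fun x => fun i => x (σ i)) ⁻¹' Δ with hE
  have hTmeas : ∀ σ : Equiv.Perm (Fin (ℓ + m + n)),
      Measurable (fun x : Fin (ℓ + m + n) → ℝ => fun i => x (σ i)) :=
    fun σ => measurable_pi_lambda _ fun i => measurable_pi_apply (σ i)
  have hEmeas : ∀ σ, MeasurableSet (E σ) := fun σ => (hTmeas σ) hΔmeas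
  -- the simplex is a.e. equal to Δ
  have hΔsimplex : Δ =ᵐ[volume] simplexLMN ℓ m n := by
    rw [MeasureTheory.ae_eq_set]
    constructor
    · have : Δ \ simplexLMN ℓ m n = ∅ := by
        rw [Set.diff_eq_empty]
        rintro x ⟨hb, hsm⟩
        exact ⟨hb, fun i j hij => (Set.mem_setOf_eq ▸ hsm).monotone hij⟩
      rw [this]; simp
    · refine measure_mono_null ?_ volume_noninj
      rintro x ⟨⟨hb, hm⟩, hn⟩
      simp only [Set.mem_setOf_eq]
      intro hinj
      apply hn
      refine ⟨hb, fun i j hij => ?_⟩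
      exact lt_of_le_of_ne (hm i j hij.le) (fun h => hij.ne (hinj h))
  -- key computation for a block-preserving permutation
  have hkey : ∀ σ : Equiv.Perm (Fin (ℓ + m + n)),
      (∀ i, blockIdx ℓ m i = blockIdx ℓ m (σ i)) →
      (∫ x in E σ, dfIntG (ℓ + m + n) α β γ x * F x)
        = Complex.exp (Complex.I * Theta (ℓ + m + n) γ σ⁻¹) *
          ∫ x in simplexLMN ℓ m n,
            ((∏ j, absPow (x j) (α (σ j)) * absPow (1 - x j) (β (σ j))) *
              ∏ j, ∏ k, if j < k then absPow (x k - x j) (2 * γ (σ j) (σ k)) else 1) *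
            F (fun i => x (σ⁻¹ i)) := by
    intro σ hσ
    set e := MeasurableEquiv.piCongrLeft (fun _ : Fin (ℓ + m + n) => ℝ)
      (σ⁻¹ : Equiv.Perm (Fin (ℓ + m + n))) with he
    have hecoe : ∀ (x : Fin (ℓ + m + n) → ℝ) (b : Fin (ℓ + m + n)), e x b = x (σ b) := by
      intro x b
      have h0 := MeasurableEquiv.piCongrLeft_apply_apply
        ((σ⁻¹ : Equiv.Perm (Fin (ℓ + m + n))) : Fin (ℓ + m + n) ≃ Fin (ℓ + m + n))
        (β := fun _ => ℝ) x (σ b)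
      rw [Equiv.Perm.inv_apply_self] at h0
      exact h0
    have hfun : ⇑e = fun x => fun i => x (σ i) :=
      funext fun x => funext fun b => hecoe x b
    have hepre : E σ = ⇑e ⁻¹' Δ := by rw [hE, hfun]
    have hMP : MeasurePreserving ⇑e volume volume :=
      volume_measurePreserving_piCongrLeft (fun _ => ℝ) _
    have hint1 := hMP.setIntegral_preimage_emb e.measurableEmbedding
      (fun y => dfIntG (ℓ + m + n) α β γ (fun i => y (σ⁻¹ i)) * F (fun i => y (σ⁻¹ i))) Δ
    have hgx : ∀ x : Fin (ℓ + m + n) → ℝ,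
        dfIntG (ℓ + m + n) α β γ (fun i => (e x) (σ⁻¹ i)) * F (fun i => (e x) (σ⁻¹ i))
          = dfIntG (ℓ + m + n) α β γ x * F x := by
      intro x
      have hx : (fun i => (e x) (σ⁻¹ i)) = x :=
        funext fun i => by rw [hecoe, Equiv.Perm.apply_inv_self]
      rw [hx]
    calc (∫ x in E σ, dfIntG (ℓ + m + n) α β γ x * F x)
        = ∫ x in ⇑e ⁻¹' Δ,
            dfIntG (ℓ + m + n) α β γ (fun i => (e x) (σ⁻¹ i)) * F (fun i => (e x) (σ⁻¹ i)) := by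
          rw [hepre]
          exact setIntegral_congr_fun (e.measurable hΔmeas)
            (fun x _ => (hgx x).symm)
      _ = ∫ y in Δ, dfIntG (ℓ + m + n) α β γ (fun i => y (σ⁻¹ i)) * F (fun i => y (σ⁻¹ i)) :=
          hint1
      _ = ∫ y in Δ, Complex.exp (Complex.I * Theta (ℓ + m + n) γ σ⁻¹) *
            (((∏ j, absPow (y j) (α (σ j)) * absPow (1 - y j) (β (σ j))) *
              ∏ j, ∏ k, if j < k then absPow (y k - y j) (2 * γ (σ j) (σ k)) else 1) *
              F (fun i => y (σ⁻¹ i))) := by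
          refine setIntegral_congr_fun hΔmeas (fun y hy => ?_)
          rw [dfIntG_perm α β γ hγsym σ hy.2]
          ring
      _ = Complex.exp (Complex.I * Theta (ℓ + m + n) γ σ⁻¹) *
            ∫ y in Δ, ((∏ j, absPow (y j) (α (σ j)) * absPow (1 - y j) (β (σ j))) *
              ∏ j, ∏ k, if j < k then absPow (y k - y j) (2 * γ (σ j) (σ k)) else 1) *
              F (fun i => y (σ⁻¹ i)) := integral_const_mul _ _
      _ = Complex.exp (Complex.I * Theta (ℓ + m + n) γ σ⁻¹) *
            ∫ x in simplexLMN ℓ m n,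
              ((∏ j, absPow (x j) (α (σ j)) * absPow (1 - x j) (β (σ j))) *
                ∏ j, ∏ k, if j < k then absPow (x k - x j) (2 * γ (σ j) (σ k)) else 1) *
              F (fun i => x (σ⁻¹ i)) := by
          rw [setIntegral_congr_set hΔsimplex]
  -- decomposition of the box
  set G := Finset.univ.filter
    (fun σ : Equiv.Perm (Fin (ℓ + m + n)) =>
      ∀ i, blockIdx ℓ m i = blockIdx ℓ m (σ i)) with hG
  have hGmem : ∀ σ, σ ∈ G ↔ ∀ i, blockIdx ℓ m i = blockIdx ℓ m (σ i) := by
    intro σ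
    rw [hG, Finset.mem_filter]
    simp
  have hEsub : ∀ σ ∈ G, E σ ⊆ boxLMN ℓ m n := by
    intro σ hσ x hx
    have hb : (fun i => x (σ i)) ∈ boxLMN ℓ m n := hx.1
    exact (box_perm_iff ((hGmem σ).mp hσ)).mp hb
  have hdisj : Set.Pairwise (↑G) (Function.onFun Disjoint E) := by
    intro σ _ τ _ hne
    rw [Function.onFun]
    rw [Set.disjoint_left]
    intro x hx1 hx2
    exact hne (strictMono_perm_unique hx1.2 hx2.2)
  have hcover : boxLMN ℓ m n =ᵐ[volume] ⋃ σ ∈ G, E σ := by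
    rw [MeasureTheory.ae_eq_set]
    constructor
    · refine measure_mono_null ?_ volume_noninj
      rintro x ⟨hb, hn⟩
      simp only [Set.mem_setOf_eq]
      intro hinj
      apply hn
      obtain ⟨σ, hσb, hσm⟩ := exists_sort_block hb hinj
      refine Set.mem_biUnion ((hGmem σ).mpr hσb) ?_
      exact ⟨box_perm hσb hb, hσm⟩
    · have : (⋃ σ ∈ G, E σ) \ boxLMN ℓ m n = ∅ := by
        rw [Set.diff_eq_empty]
        intro x hx
        obtain ⟨σ, hσ, hxσ⟩ := Set.mem_iUnion₂.mp hx
        exact hEsub σ hσ hxσ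
      rw [this]; simp
  calc (∫ x in boxLMN ℓ m n, dfIntG (ℓ + m + n) α β γ x * F x)
      = ∫ x in ⋃ σ ∈ G, E σ, dfIntG (ℓ + m + n) α β γ x * F x :=
        setIntegral_congr_set hcover
    _ = ∑ σ ∈ G, ∫ x in E σ, dfIntG (ℓ + m + n) α β γ x * F x :=
        integral_biUnion_finset G (fun σ _ => hEmeas σ) hdisj
          (fun σ hσ => hfint.mono_set (hEsub σ hσ))
    _ = _ := Finset.sum_congr rfl (fun σ hσ => hkey σ ((hGmem σ).mp hσ))
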